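/- For L ≥ 3, consider the periodic chain with sites indexed by ℤ/L and Hilbert space ⨂_{j∈ℤ/L} ℂ². Let N = Σ_{j∈ℤ/L} σᶻ_j σᶻ_{j+1}. Then for every j ∈ ℤ/L, the operator σˣ_j (1 − σᶻ_{j−1} σᶻ_{j+1}) commutes with N; consequently D₀ = (1/2) Σ_{j∈ℤ/L} σˣ_j (1 − σᶻ_{j−1} σᶻ_{j+1}) commutes with N. -/

import Mathlib

/-!
STATEMENT 9: On the periodic chain of L qubits (sites indexed by ℤ/L, L ≥ 3), with
N = Σ_{j∈ℤ/L} σᶻ_j σᶻ_{j+1}, every operator σˣ_j (1 − σᶻ_{j−1} σᶻ_{j+1}) commutes with N,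
and hence so does D₀ = (1/2) Σ_{j∈ℤ/L} σˣ_j (1 − σᶻ_{j−1} σᶻ_{j+1}).
-/

noncomputable section

open Matrix Complex

/-- Pauli X matrix. -/
def sigmaX : Matrix (Fin 2) (Fin 2) ℂ := !![0, 1; 1, 0]

/-- Pauli Z matrix. -/
def sigmaZ : Matrix (Fin 2) (Fin 2) ℂ := !![1, 0; 0, -1]

/-- The operator on ⨂_{k∈ℤ/L} ℂ² acting as the 2×2 matrix `A` on the j-th tensor factor
and as the identity on all the others (matrix entries of a tensor product). -/
def siteOpP (L : ℕ) [NeZero L] (j : ZMod L) (A : Matrix (Fin 2) (Fin 2) ℂ) :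
    Matrix (ZMod L → Fin 2) (ZMod L → Fin 2) ℂ :=
  fun s t => ∏ k : ZMod L, if k = j then A (s k) (t k) else (if s k = t k then 1 else 0)

/-- σˣ_j on the periodic chain. -/
def PXP (L : ℕ) [NeZero L] (j : ZMod L) : Matrix (ZMod L → Fin 2) (ZMod L → Fin 2) ℂ :=
  siteOpP L j sigmaX

/-- σᶻ_j on the periodic chain. -/
def PZP (L : ℕ) [NeZero L] (j : ZMod L) : Matrix (ZMod L → Fin 2) (ZMod L → Fin 2) ℂ :=
  siteOpP L j sigmaZ

/-!
The bonds `σᶻ_{j-1} σᶻ_j` and `σᶻ_j σᶻ_{j+1}` of `N` anticommute with `σˣ_j`, all other bonds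
commute with it. Since `σᶻ_{j-1} σᶻ_{j+1}` exchanges the two bonds at `j`, the factor
`1 - σᶻ_{j-1} σᶻ_{j+1}` annihilates their sum `B` from either side, so both
`σˣ_j (1 - σᶻ_{j-1} σᶻ_{j+1}) B` and `B σˣ_j (1 - σᶻ_{j-1} σᶻ_{j+1})` vanish.
-/

section PiTensor

variable {ι n R : Type*} [Fintype ι] [CommRing R]

def piTensor (f : ι → Matrix n n R) : Matrix (ι → n) (ι → n) R :=
  fun s t => ∏ k, f k (s k) (t k)

theorem piTensor_one [DecidableEq n] : piTensor (1 : ι → Matrix n n R) = 1 := by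
  ext s t
  simp only [piTensor, Pi.one_apply, Matrix.one_apply, Fintype.prod_boole, funext_iff]

theorem piTensor_mul [DecidableEq ι] [Fintype n] (f g : ι → Matrix n n R) :
    piTensor f * piTensor g = piTensor (f * g) := by
  ext s t
  simp only [piTensor, Matrix.mul_apply, Pi.mul_apply, Fintype.prod_sum, Finset.prod_mul_distrib]

theorem Commute.piTensor [DecidableEq ι] [Fintype n] {f g : ι → Matrix n n R} (h : Commute f g) :
    Commute (piTensor f) (piTensor g) := by
  rw [commute_iff_eq, piTensor_mul, piTensor_mul, h.eq]

theorem piTensor_mulSingle_smul [DecidableEq ι] [DecidableEq n] (j : ι) (c : R)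
    (A : Matrix n n R) :
    piTensor (Pi.mulSingle j (c • A)) = c • piTensor (Pi.mulSingle j A) := by
  ext s t
  simp only [piTensor, Matrix.smul_apply, smul_eq_mul,
    ← Finset.mul_prod_erase _ _ (Finset.mem_univ j)]
  simp only [Pi.mulSingle_eq_same, Matrix.smul_apply, smul_eq_mul, mul_assoc]
  congr 2
  refine Finset.prod_congr rfl fun k hk => ?_
  rw [Pi.mulSingle_eq_of_ne (Finset.ne_of_mem_erase hk),
    Pi.mulSingle_eq_of_ne (Finset.ne_of_mem_erase hk)]

end PiTensor

section Ring

variable {R : Type*} [Ring R]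

theorem commute_mul_one_sub_of_mul_eq_neg {x q y : R} (hxy : x * y = -(y * x))
    (hqy : q * y = y) (hyq : y * q = y) : Commute (x * (1 - q)) y := by
  have hleft : x * (1 - q) * y = 0 := by rw [mul_assoc, sub_mul, one_mul, hqy, sub_self, mul_zero]
  have hright : y * (x * (1 - q)) = 0 := by
    have hyx : y * x = -(x * y) := by rw [hxy, neg_neg]
    rw [← mul_assoc, mul_sub, mul_one, hyx, neg_mul, mul_assoc, hyq, sub_self]
  exact hleft.trans hright.symm

theorem mul_mul_add_mul_eq {a b c : R} (hac : Commute a c) (hbc : Commute b c)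
    (ha : a * a = 1) (hc : c * c = 1) : a * c * (a * b + b * c) = a * b + b * c := by
  have h₁ : a * c * (a * b) = b * c := by
    rw [hac.eq, mul_assoc c, ← mul_assoc a, ha, one_mul, hbc.eq]
  have h₂ : a * c * (b * c) = a * b := by
    rw [mul_assoc a, hbc.eq, ← mul_assoc c, hc, one_mul]
  rw [mul_add, h₁, h₂, add_comm]

end Ring

theorem Commute.sum_right_of_pair {R ι : Type*} [Semiring R] [Fintype ι] [DecidableEq ι]
    {x : R} {f : ι → R} {i₀ i₁ : ι} (h : i₀ ≠ i₁) (hpair : Commute x (f i₀ + f i₁))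
    (hrest : ∀ i, i ≠ i₀ → i ≠ i₁ → Commute x (f i)) : Commute x (∑ i, f i) := by
  rw [← Finset.add_sum_erase _ _ (Finset.mem_univ i₀),
    ← Finset.add_sum_erase _ _ (Finset.mem_erase.2 ⟨h.symm, Finset.mem_univ i₁⟩), ← add_assoc]
  refine hpair.add_right (Commute.sum_right _ _ _ fun i hi => ?_)
  obtain ⟨hi₁, hi₀⟩ := Finset.mem_erase.1 hi
  exact hrest i (Finset.mem_erase.1 hi₀).1 hi₁

section Chain

variable {L : ℕ} [NeZero L]

theorem siteOpP_eq_piTensor (j : ZMod L) (A : Matrix (Fin 2) (Fin 2) ℂ) :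
    siteOpP L j A = piTensor (Pi.mulSingle j A) := by
  ext s t
  refine Finset.prod_congr rfl fun k _ => ?_
  by_cases hk : k = j
  · simp [hk]
  · simp [hk, Matrix.one_apply]

theorem siteOpP_mul_siteOpP (j : ZMod L) (A B : Matrix (Fin 2) (Fin 2) ℂ) :
    siteOpP L j A * siteOpP L j B = siteOpP L j (A * B) := by
  rw [siteOpP_eq_piTensor, siteOpP_eq_piTensor, siteOpP_eq_piTensor, piTensor_mul,
    Pi.mulSingle_mul]

theorem siteOpP_one (j : ZMod L) : siteOpP L j 1 = 1 := by
  rw [siteOpP_eq_piTensor, Pi.mulSingle_one, piTensor_one]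

theorem siteOpP_smul (j : ZMod L) (c : ℂ) (A : Matrix (Fin 2) (Fin 2) ℂ) :
    siteOpP L j (c • A) = c • siteOpP L j A := by
  rw [siteOpP_eq_piTensor, siteOpP_eq_piTensor, piTensor_mulSingle_smul]

theorem siteOpP_commute_of_ne {j k : ZMod L} (h : j ≠ k) (A B : Matrix (Fin 2) (Fin 2) ℂ) :
    Commute (siteOpP L j A) (siteOpP L k B) := by
  rw [siteOpP_eq_piTensor, siteOpP_eq_piTensor]
  exact (Pi.mulSingle_commute (f := fun _ => Matrix (Fin 2) (Fin 2) ℂ) h A B).piTensor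

theorem sigmaZ_mul_sigmaZ : sigmaZ * sigmaZ = 1 := by
  rw [sigmaZ, Matrix.mul_fin_two, Matrix.one_fin_two]
  norm_num

theorem sigmaX_mul_sigmaZ : sigmaX * sigmaZ = (-1 : ℂ) • (sigmaZ * sigmaX) := by
  rw [sigmaX, sigmaZ, Matrix.mul_fin_two, Matrix.mul_fin_two, Matrix.smul_of, Matrix.smul_cons]
  norm_num

theorem PZP_mul_self (j : ZMod L) : PZP L j * PZP L j = 1 := by
  rw [PZP, siteOpP_mul_siteOpP, sigmaZ_mul_sigmaZ, siteOpP_one]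

theorem PZP_commute (i k : ZMod L) : Commute (PZP L i) (PZP L k) := by
  obtain rfl | h := eq_or_ne i k
  · exact Commute.refl _
  · exact siteOpP_commute_of_ne h _ _

theorem PXP_commute_PZP_of_ne {j k : ZMod L} (h : j ≠ k) : Commute (PXP L j) (PZP L k) :=
  siteOpP_commute_of_ne h _ _

theorem PXP_mul_PZP_self (j : ZMod L) : PXP L j * PZP L j = -(PZP L j * PXP L j) := by
  rw [PXP, PZP, siteOpP_mul_siteOpP, siteOpP_mul_siteOpP, sigmaX_mul_sigmaZ, siteOpP_smul,
    neg_one_smul]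

theorem PZP_mul_PZP_commute (i j k l : ZMod L) :
    Commute (PZP L i * PZP L j) (PZP L k * PZP L l) :=
  ((PZP_commute i k).mul_right (PZP_commute i l)).mul_left
    ((PZP_commute j k).mul_right (PZP_commute j l))

theorem commute_PXP_mul_one_sub_sum_PZP_mul_PZP (hL : L ≠ 1) (j : ZMod L) :
    Commute (PXP L j * (1 - PZP L (j - 1) * PZP L (j + 1)))
      (∑ i : ZMod L, PZP L i * PZP L (i + 1)) := by
  have : Nontrivial (ZMod L) := ZMod.nontrivial_iff.2 hL
  have hprev : j - 1 ≠ j := sub_eq_self.not.2 one_ne_zero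
  have hnext : j + 1 ≠ j := add_ne_left.2 one_ne_zero
  refine Commute.sum_right_of_pair hprev ?_ fun i hi₀ hi₁ => ?_
  · rw [sub_add_cancel]
    set x := PXP L j
    set a := PZP L (j - 1)
    set b := PZP L j
    set c := PZP L (j + 1)
    have hxa : Commute x a := PXP_commute_PZP_of_ne hprev.symm
    have hxc : Commute x c := PXP_commute_PZP_of_ne hnext.symm
    have hxb : x * b = -(b * x) := PXP_mul_PZP_self j
    have hanti : x * (a * b + b * c) = -((a * b + b * c) * x) := by
      rw [mul_add, ← mul_assoc, hxa.eq, mul_assoc, hxb, ← mul_assoc, hxb, neg_mul, mul_assoc b,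
        hxc.eq]
      noncomm_ring
    have hqB : a * c * (a * b + b * c) = a * b + b * c :=
      mul_mul_add_mul_eq (PZP_commute _ _) (PZP_commute _ _) (PZP_mul_self _) (PZP_mul_self _)
    have hBq : (a * b + b * c) * (a * c) = a * b + b * c := by
      rw [← ((PZP_mul_PZP_commute (j - 1) (j + 1) (j - 1) j).add_right
        (PZP_mul_PZP_commute (j - 1) (j + 1) j (j + 1))).eq, hqB]
    exact commute_mul_one_sub_of_mul_eq_neg hanti hqB hBq
  · have hX : Commute (PXP L j) (PZP L i * PZP L (i + 1)) :=
      (PXP_commute_PZP_of_ne (Ne.symm hi₁)).mul_right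
        (PXP_commute_PZP_of_ne fun h => hi₀ (by rw [h, add_sub_cancel_right]))
    exact hX.mul_left ((Commute.one_left _).sub_left (PZP_mul_PZP_commute _ _ _ _))

end Chain

theorem statement_9 (L : ℕ) [NeZero L] (hL : 3 ≤ L)
    (N : Matrix (ZMod L → Fin 2) (ZMod L → Fin 2) ℂ)
    (hN : N = ∑ j : ZMod L, PZP L j * PZP L (j + 1)) :
    (∀ j : ZMod L, Commute (PXP L j * (1 - PZP L (j - 1) * PZP L (j + 1))) N) ∧
    Commute ((2 : ℂ)⁻¹ • ∑ j : ZMod L, PXP L j * (1 - PZP L (j - 1) * PZP L (j + 1))) N := by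
  subst hN
  have hcommute := commute_PXP_mul_one_sub_sum_PZP_mul_PZP (L := L) (by omega)
  exact ⟨hcommute, (Commute.sum_left _ _ _ fun j _ => hcommute j).smul_left _⟩

end
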